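/- Let g0 ∈ (1/2, 1) and define the banded-policy fidelity sequence by g_0 := g0 and g_{r+1} := F_distill(g_r, g_r). Then the sequence (g_r) is strictly increasing, stays in (1/2, 1), and converges to 1; hence with an increasing number of rounds the banded distillation policy achieves fidelities arbitrarily close to 1 from any initial fidelity strictly above 1/2. -/
import Mathlib


/-- Output fidelity of the BBPSSW distillation protocol on two isotropic states
of fidelities `f1` and `f2`. -/
noncomputable def Fdistill (f1 f2 : ℝ) : ℝ :=
  (1 - (f1 + f2) + 10 * f1 * f2) / (5 - 2 * (f1 + f2) + 8 * f1 * f2)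

lemma denom_pos (f : ℝ) : 0 < 5 - 2 * (f + f) + 8 * f * f := by
  nlinarith [sq_nonneg (f - 1/4)]

lemma step_lemma {f : ℝ} (hf : f ∈ Set.Ioo (1/2 : ℝ) 1) :
    f < Fdistill f f ∧ Fdistill f f ∈ Set.Ioo (1/2 : ℝ) 1 := by
  obtain ⟨h1, h2⟩ := hf
  have hD := denom_pos f
  have hlt : f < Fdistill f f := by
    rw [Fdistill, lt_div_iff₀ hD]
    nlinarith [mul_pos (mul_pos (sub_pos.2 h2) (by linarith : (0:ℝ) < 4*f - 1))
      (by linarith : (0:ℝ) < 2*f - 1)]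
  refine ⟨hlt, lt_trans h1 hlt, ?_⟩
  rw [Fdistill, div_lt_one hD]
  nlinarith [mul_pos (sub_pos.2 h2) (by linarith : (0:ℝ) < f + 2)]

theorem stmt_15 (g0 : ℝ) (hg0 : g0 ∈ Set.Ioo (1/2 : ℝ) 1)
    (g : ℕ → ℝ) (hzero : g 0 = g0)
    (hsucc : ∀ r : ℕ, g (r + 1) = Fdistill (g r) (g r)) :
    StrictMono g ∧ (∀ r : ℕ, g r ∈ Set.Ioo (1/2 : ℝ) 1) ∧
    Filter.Tendsto g Filter.atTop (nhds 1) := by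
  have hmem : ∀ r : ℕ, g r ∈ Set.Ioo (1/2 : ℝ) 1 := by
    intro r
    induction r with
    | zero => rw [hzero]; exact hg0
    | succ n ih => rw [hsucc]; exact (step_lemma ih).2
  have hlt : ∀ r : ℕ, g r < g (r + 1) := by
    intro r; rw [hsucc]; exact (step_lemma (hmem r)).1
  have hmono : StrictMono g := strictMono_nat_of_lt_succ hlt
  refine ⟨hmono, hmem, ?_⟩
  have hbdd : BddAbove (Set.range g) := ⟨1, by rintro x ⟨r, rfl⟩; exact (hmem r).2.le⟩
  set L := ⨆ r, g r with hL
  have htend : Filter.Tendsto g Filter.atTop (nhds L) :=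
    tendsto_atTop_ciSup hmono.monotone hbdd
  have hLle : L ≤ 1 := ciSup_le fun r => (hmem r).2.le
  have hLgt : 1/2 < L := lt_of_lt_of_le (hzero ▸ hg0.1) (le_ciSup hbdd 0)
  have hDL := denom_pos L
  -- limit satisfies fixed point equation
  have htend' : Filter.Tendsto (fun r => g (r + 1)) Filter.atTop (nhds L) :=
    htend.comp (Filter.tendsto_add_atTop_nat 1)
  have hcont : Filter.Tendsto (fun r => Fdistill (g r) (g r)) Filter.atTop
      (nhds (Fdistill L L)) := by
    have hc : ContinuousAt (fun x : ℝ => Fdistill x x) L := by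
      apply ContinuousAt.div
      · fun_prop
      · fun_prop
      · exact ne_of_gt hDL
    exact hc.tendsto.comp htend
  have heq : Fdistill L L = L := by
    apply tendsto_nhds_unique _ htend'
    simpa [hsucc] using hcont
  have hkey : 1 - (L + L) + 10 * L * L = L * (5 - 2 * (L + L) + 8 * L * L) := by
    have := heq
    rw [Fdistill, div_eq_iff (ne_of_gt hDL)] at this
    linarith [this]
  have hL1 : L = 1 := by
    by_contra h
    have hlt1 : L < 1 := lt_of_le_of_ne hLle h
    nlinarith [mul_pos (mul_pos (sub_pos.2 hlt1) (by linarith : (0:ℝ) < 4*L - 1))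
      (by linarith : (0:ℝ) < 2*L - 1)]
  rwa [hL1] at htend
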